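/- Let A ⊆ ℝ be nonempty compact with fractal string L_A = (ℓ_j). Then the tube function V_A(ε) = vol(A_ε \ A) is piecewise linear; for every ε ∈ (0,∞) not of the form ℓ_j/2, V_A is differentiable at ε with V_A'(ε) = 2 + 2N(1/(2ε)), where N is the geometric counting function of L_A. Moreover, the right derivative at every ε > 0 equals 2β₀(A;ε) = 2 + 2·#{j : ℓ_j > 2ε} and the left derivative equals 2 + 2N(1/(2ε)). -/

import Mathlib

open Metric MeasureTheory Filter Set Topology

/-! The two unbounded components contribute `ε` each to the tube and the gap of length `ℓ j`
contributes `min (2ε) (ℓ j)`, so the tube formula says `V = tubeVolume ℓ` on `(0, ∞)`.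
As `ℓ j → 0`, only finitely many lengths lie near a level `2ε > 0`, and none except possibly
`2ε` itself lies close enough. Hence on each side of `ε` the partition of the gaps into those
with `2x ≤ ℓ j` and the rest is frozen, `V` is affine there, and its slope is `2` plus twice the
number of unswallowed gaps: on the left the gaps of length exactly `2ε` still count, on the
right they no longer do. -/

noncomputable def tubeVolume (ℓ : ℕ → ℝ) (ε : ℝ) : ℝ :=
  2 * ε + ∑' j, min (2 * ε) (ℓ j)

namespace Summable

variable {ι : Type*} {ℓ : ι → ℝ}

theorem finite_setOf_le (hsum : Summable ℓ) {c : ℝ} (hc : 0 < c) : {j | c ≤ ℓ j}.Finite := by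
  simpa only [not_lt] using eventually_cofinite.1 (hsum.tendsto_cofinite_zero.eventually_lt_const hc)

theorem exists_pos_forall_abs_sub_lt_imp_eq (hsum : Summable ℓ) {c : ℝ} (hc : 0 < c) :
    ∃ η > 0, ∀ j, |ℓ j - c| < η → ℓ j = c := by
  have hfin : {j | c / 2 ≤ ℓ j ∧ ℓ j ≠ c}.Finite :=
    (hsum.finite_setOf_le (half_pos hc)).subset fun j hj => hj.1
  have hev : ∀ᶠ y in 𝓝 c, c / 2 < y ∧ ∀ j ∈ {j | c / 2 ≤ ℓ j ∧ ℓ j ≠ c}, y ≠ ℓ j :=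
    (lt_mem_nhds (half_lt_self hc)).and
      ((eventually_all_finite hfin).2 fun j hj => eventually_ne_nhds hj.2.symm)
  obtain ⟨η, hη, hball⟩ := Metric.eventually_nhds_iff.1 hev
  refine ⟨η, hη, fun j hj => by_contra fun hne => ?_⟩
  have hnear := hball (show dist (ℓ j) c < η from hj)
  exact hnear.2 j ⟨hnear.1.le, hne⟩ rfl

theorem tsum_min_eq_of_forall (hsum : Summable ℓ) {t : ℝ} {s : Set ι} (hs : s.Finite)
    (hmem : ∀ j ∈ s, t ≤ ℓ j) (hnot : ∀ j ∉ s, ℓ j ≤ t) :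
    ∑' j, min t (ℓ j) = (∑' j, ℓ j - ∑ j ∈ hs.toFinset, ℓ j) + s.ncard * t := by
  have hcompl : ∀ j : {j // j ∉ hs.toFinset}, min t (ℓ j) = ℓ j := fun j =>
    min_eq_right (hnot j (by simpa using j.2))
  have hmin : Summable fun j => min t (ℓ j) :=
    (Finset.summable_compl_iff hs.toFinset).1 <| by
      simpa only [hcompl] using (Finset.summable_compl_iff hs.toFinset).2 hsum
  rw [← hmin.sum_add_tsum_compl (s := hs.toFinset), ← hsum.sum_add_tsum_compl (s := hs.toFinset),
    Finset.sum_congr rfl fun j hj => min_eq_left (hmem j (hs.mem_toFinset.1 hj)),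
    Finset.sum_const, nsmul_eq_mul, ← Set.ncard_eq_toFinset_card s hs]
  simp only [hcompl]
  ring

theorem tsum_min_eq_ncard_mul_add_tsum (hsum : Summable ℓ) {t : ℝ} (ht : 0 < t) :
    ∑' j, min t (ℓ j) = {j | t ≤ ℓ j}.ncard * t + ∑' j : {j // ℓ j < t}, ℓ j := by
  have hs := hsum.finite_setOf_le ht
  have hcompl : ((hs.toFinset : Set ι))ᶜ = {j | ℓ j < t} := by
    ext j; simp
  rw [hsum.tsum_min_eq_of_forall hs (fun j hj => hj) (fun j hj => (not_le.1 hj).le),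
    ← hsum.sum_add_tsum_compl (s := hs.toFinset), tsum_congr_set_coe ℓ hcompl]
  rw [add_sub_cancel_left, add_comm]
  rfl

end Summable

section

variable {ℓ : ℕ → ℝ}

theorem tubeVolume_eq (hsum : Summable ℓ) {ε : ℝ} (hε : 0 < ε) :
    tubeVolume ℓ ε = 2 * ε + 2 * ε * {j | 2 * ε ≤ ℓ j}.ncard + ∑' j : {j // ℓ j < 2 * ε}, ℓ j := by
  rw [tubeVolume, hsum.tsum_min_eq_ncard_mul_add_tsum (by positivity)]
  ring

theorem exists_tubeVolume_eq_affine (hsum : Summable ℓ) {ε : ℝ} (hε : 0 < ε) :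
    ∃ δ > 0, ∃ a b : ℝ,
      (∀ x ∈ Ioc (ε - δ) ε, tubeVolume ℓ x = a + (2 + 2 * {j | 2 * ε ≤ ℓ j}.ncard) * x) ∧
      (∀ x ∈ Ico ε (ε + δ), tubeVolume ℓ x = b + (2 + 2 * {j | 2 * ε < ℓ j}.ncard) * x) := by
  obtain ⟨η, hη, hgap⟩ := hsum.exists_pos_forall_abs_sub_lt_imp_eq (by positivity : 0 < 2 * ε)
  have hle := hsum.finite_setOf_le (by positivity : 0 < 2 * ε)
  have hlt : {j | 2 * ε < ℓ j}.Finite := hle.subset fun j (hj : 2 * ε < ℓ j) => hj.le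
  refine ⟨η / 2, half_pos hη, ∑' j, ℓ j - ∑ j ∈ hle.toFinset, ℓ j,
    ∑' j, ℓ j - ∑ j ∈ hlt.toFinset, ℓ j, fun x hx => ?_, fun x hx => ?_⟩
  · have hnot : ∀ j ∉ {j | 2 * ε ≤ ℓ j}, ℓ j ≤ 2 * x := fun j (hj : ¬2 * ε ≤ ℓ j) => by
      by_contra! hx'
      have := hgap j (abs_sub_lt_iff.2 ⟨by linarith [hx.1], by linarith [hx.1]⟩)
      exact hj this.ge
    rw [tubeVolume, hsum.tsum_min_eq_of_forall hle (fun j hj => by linarith [hx.2, hj.out]) hnot]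
    ring
  · have hmem : ∀ j ∈ {j | 2 * ε < ℓ j}, 2 * x ≤ ℓ j := fun j hj => by
      by_contra! hx'
      have := hgap j (abs_sub_lt_iff.2 ⟨by linarith [hx.2], by linarith [hj.out]⟩)
      exact hj.out.ne' this
    rw [tubeVolume, hsum.tsum_min_eq_of_forall hlt hmem
      (fun j (hj : ¬2 * ε < ℓ j) => by linarith [hx.1, not_lt.1 hj])]
    ring

theorem hasDerivWithinAt_tubeVolume_Ici (hsum : Summable ℓ) {ε : ℝ} (hε : 0 < ε) :
    HasDerivWithinAt (tubeVolume ℓ) (2 + 2 * {j | 2 * ε < ℓ j}.ncard) (Ici ε) ε := by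
  obtain ⟨δ, hδ, -, b, -, hright⟩ := exists_tubeVolume_eq_affine hsum hε
  exact ((hasDerivAt_const_mul _).const_add b).hasDerivWithinAt.congr_of_eventuallyEq
    (eventually_of_mem (Ico_mem_nhdsGE (by linarith)) hright) (hright ε ⟨le_rfl, by linarith⟩)

theorem hasDerivWithinAt_tubeVolume_Iic (hsum : Summable ℓ) {ε : ℝ} (hε : 0 < ε) :
    HasDerivWithinAt (tubeVolume ℓ) (2 + 2 * {j | 2 * ε ≤ ℓ j}.ncard) (Iic ε) ε := by
  obtain ⟨δ, hδ, a, -, hleft, -⟩ := exists_tubeVolume_eq_affine hsum hε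
  exact ((hasDerivAt_const_mul _).const_add a).hasDerivWithinAt.congr_of_eventuallyEq
    (eventually_of_mem (Ioc_mem_nhdsLE (by linarith)) hleft) (hleft ε ⟨by linarith, le_rfl⟩)

theorem exists_tubeVolume_eq_affine_Ioo (hsum : Summable ℓ) {ε : ℝ} (hε : 0 < ε)
    (hgap : ∀ j, ℓ j ≠ 2 * ε) :
    ∃ δ > 0, ∃ a : ℝ,
      ∀ x ∈ Ioo (ε - δ) (ε + δ), tubeVolume ℓ x = a + (2 + 2 * {j | 2 * ε ≤ ℓ j}.ncard) * x := by
  obtain ⟨δ, hδ, a, b, hleft, hright⟩ := exists_tubeVolume_eq_affine hsum hε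
  have hsets : {j | 2 * ε < ℓ j} = {j | 2 * ε ≤ ℓ j} :=
    Set.ext fun j => lt_iff_le_and_ne.trans (and_iff_left (hgap j).symm)
  rw [hsets] at hright
  have hab : a = b := by
    linarith [(hleft ε ⟨by linarith, le_rfl⟩).symm.trans (hright ε ⟨le_rfl, by linarith⟩)]
  refine ⟨δ, hδ, a, fun x hx => ?_⟩
  rcases le_total x ε with h | h
  · exact hleft x ⟨hx.1, h⟩
  · exact hab ▸ hright x ⟨h, hx.2⟩

end

theorem tube_function_derivatives_dim_one (A : Set ℝ) (ℓ : ℕ → ℝ) (hsum : Summable ℓ)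
    (htube : ∀ ε > (0:ℝ),
      (volume (Metric.cthickening ε A \ A)).toReal =
        2 * ε + 2 * ε * (Set.ncard {j | 2 * ε ≤ ℓ j} : ℝ) +
          ∑' j : {j : ℕ // ℓ j < 2 * ε}, ℓ (j : ℕ)) :
    (∀ ε > (0:ℝ), (∀ j, ε ≠ ℓ j / 2) →
      (∃ δ > (0:ℝ), ∃ c m : ℝ, ∀ x ∈ Set.Ioo (ε - δ) (ε + δ),
        (volume (Metric.cthickening x A \ A)).toReal = c + m * x) ∧
      HasDerivAt (fun x : ℝ => (volume (Metric.cthickening x A \ A)).toReal)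
        (2 + 2 * (Set.ncard {j | 2 * ε ≤ ℓ j} : ℝ)) ε) ∧
    (∀ ε > (0:ℝ),
      HasDerivWithinAt (fun x : ℝ => (volume (Metric.cthickening x A \ A)).toReal)
        (2 + 2 * (Set.ncard {j | 2 * ε < ℓ j} : ℝ)) (Set.Ici ε) ε ∧
      HasDerivWithinAt (fun x : ℝ => (volume (Metric.cthickening x A \ A)).toReal)
        (2 + 2 * (Set.ncard {j | 2 * ε ≤ ℓ j} : ℝ)) (Set.Iic ε) ε) := by
  have hV : ∀ x > 0, (volume (cthickening x A \ A)).toReal = tubeVolume ℓ x := fun x hx =>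
    (htube x hx).trans (tubeVolume_eq hsum hx).symm
  have hVnhds : ∀ ε > 0,
      (fun x => (volume (cthickening x A \ A)).toReal) =ᶠ[𝓝 ε] tubeVolume ℓ := fun ε hε =>
    (lt_mem_nhds hε).mono hV
  refine ⟨fun ε hε hgap => ?_, fun ε hε => ⟨?_, ?_⟩⟩
  · obtain ⟨δ, hδ, a, haff⟩ :=
      exists_tubeVolume_eq_affine_Ioo hsum hε fun j h => hgap j (by linarith)
    have hδε : 0 < min δ ε := lt_min hδ hε
    have hloc : ∀ x ∈ Ioo (ε - min δ ε) (ε + min δ ε), (volume (cthickening x A \ A)).toReal =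
        a + (2 + 2 * {j | 2 * ε ≤ ℓ j}.ncard) * x := fun x hx => by
      have := min_le_left δ ε
      rw [hV x (by linarith [min_le_right δ ε, hx.1])]
      exact haff x ⟨by linarith [hx.1], by linarith [hx.2]⟩
    refine ⟨⟨min δ ε, hδε, a, _, hloc⟩, ((hasDerivAt_const_mul _).const_add a).congr_of_eventuallyEq
      (eventually_of_mem (Ioo_mem_nhds (by linarith) (by linarith)) hloc)⟩
  · exact (hasDerivWithinAt_tubeVolume_Ici hsum hε).congr_of_eventuallyEq
      (nhdsWithin_le_nhds (hVnhds ε hε)) (hV ε hε)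
  · exact (hasDerivWithinAt_tubeVolume_Iic hsum hε).congr_of_eventuallyEq
      (nhdsWithin_le_nhds (hVnhds ε hε)) (hV ε hε)
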